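/- Let X be a Banach space of type 2 and cotype p (2 ≤ p < ∞) and let B = {e_k} be a seminormalized quasi-greedy basis of X. Then there are constants c, C with c·|Γ|^{1/p} ≤ ‖Σ_{k∈Γ} e_k‖ ≤ C·|Γ|^{1/2} for every finite Γ, and consequently μ(N) ≲ N^{1/2 − 1/p}. -/

import Mathlib

open Finset Filter

/-- A (seminormalized Schauder) basis of a real normed space, given by the basis
vectors `e k` together with the coefficient functionals `coeff k`. -/
structure QGBasis (X : Type*) [NormedAddCommGroup X] [NormedSpace ℝ X] where
  e : ℕ → X
  coeff : ℕ → X → ℝ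
  coeff_add : ∀ k x y, coeff k (x + y) = coeff k x + coeff k y
  coeff_smul : ∀ (k : ℕ) (c : ℝ) (x : X), coeff k (c • x) = c * coeff k x
  coeff_e : ∀ j k, coeff j (e k) = if j = k then 1 else 0
  expansion : ∀ x : X,
    Tendsto (fun N => ∑ k ∈ Finset.range N, coeff k x • e k) atTop (nhds x)
  c_norm : ℝ
  C_norm : ℝ
  c_norm_pos : 0 < c_norm
  norm_e_ge : ∀ k, c_norm ≤ ‖e k‖
  norm_e_le : ∀ k, ‖e k‖ ≤ C_norm

namespace QGBasis

variable {X : Type*} [NormedAddCommGroup X] [NormedSpace ℝ X] (B : QGBasis X)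

/-- `π` enumerates the coefficients of `x` in decreasing order of modulus;
position `k` (zero-based) carries the `(k+1)`-st largest coefficient. -/
def IsGreedyPerm (x : X) (π : ℕ → ℕ) : Prop :=
  Function.Bijective π ∧ ∀ k, |B.coeff (π (k + 1)) x| ≤ |B.coeff (π k) x|

/-- The thresholding greedy approximation of order `N` associated to the
greedy enumeration `π`. -/
def G (π : ℕ → ℕ) (N : ℕ) (x : X) : X :=
  ∑ k ∈ Finset.range N, B.coeff (π k) x • B.e (π k)

/-- `B` is quasi-greedy with constant `K`. -/
def QuasiGreedyWith (K : ℝ) : Prop :=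
  ∀ (x : X) (π : ℕ → ℕ), B.IsGreedyPerm x π → ∀ N,
    ‖B.G π N x‖ ≤ K * ‖x‖ ∧ ‖x - B.G π N x‖ ≤ K * ‖x‖

/-- Coordinate projection onto the index set `Γ`. -/
def S (Γ : Finset ℕ) (x : X) : X := ∑ k ∈ Γ, B.coeff k x • B.e k

/-- Right democracy function. -/
noncomputable def hr (N : ℕ) : ℝ :=
  sSup {r | ∃ Γ : Finset ℕ, Γ.card = N ∧ r = ‖∑ k ∈ Γ, B.e k‖}

/-- Left democracy function. -/
noncomputable def hl (N : ℕ) : ℝ :=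
  sInf {r | ∃ Γ : Finset ℕ, Γ.card = N ∧ r = ‖∑ k ∈ Γ, B.e k‖}

/-- The democracy ratio `μ(N) = sup_{1 ≤ k ≤ N} h_r(k)/h_l(k)`. -/
noncomputable def mu (N : ℕ) : ℝ :=
  sSup {r | ∃ k, 1 ≤ k ∧ k ≤ N ∧ r = B.hr k / B.hl k}

/-- Best `N`-term approximation error. -/
noncomputable def sigma (N : ℕ) (x : X) : ℝ :=
  sInf {r | ∃ (Γ : Finset ℕ) (b : ℕ → ℝ),
    Γ.card ≤ N ∧ r = ‖x - ∑ k ∈ Γ, b k • B.e k‖}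

/-- `Γ` is a greedy set for `x`: every coefficient inside dominates every
coefficient outside. -/
def IsGreedySet (x : X) (Γ : Finset ℕ) : Prop :=
  ∀ j ∈ Γ, ∀ i ∉ Γ, |B.coeff i x| ≤ |B.coeff j x|

end QGBasis

/-! For a ±1 vector `x = ∑_{k ∈ Γ} a_k e_k` every enumeration listing `Γ` first is a greedy
ordering, so projecting `x` onto any `A ⊆ Γ` is a greedy approximation and costs at most the
quasi-greedy constant `K`; changing the signs costs at most `2K`. Hence every Rademacher average
of `(e_k)_{k ∈ Γ}` is within a factor `2K` of `‖∑_{k ∈ Γ} e_k‖`, and type 2 and cotype `p`,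
applied to the seminormalized vectors `e_k`, give `‖∑_{k ∈ Γ} e_k‖ ≲ |Γ|^{1/2}` and
`|Γ|^{1/p} ≲ ‖∑_{k ∈ Γ} e_k‖`. The bound on `μ` is the quotient of the two. -/

theorem List.Nodup.exists_bijective_getElem {α : Type*} [DecidableEq α] [Infinite α]
    [Countable α] {l : List α} (hl : l.Nodup) :
    ∃ π : ℕ → α, Function.Bijective π ∧ ∀ k (hk : k < l.length), π k = l[k] := by
  have : Infinite {k : ℕ // ¬k < l.length} :=
    (Set.finite_lt_nat l.length).infinite_compl.to_subtype
  have : Infinite {x : α // x ∉ l} := l.finite_toSet.infinite_compl.to_subtype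
  obtain ⟨_⟩ := nonempty_denumerable {k : ℕ // ¬k < l.length}
  obtain ⟨_⟩ := nonempty_denumerable {x : α // x ∉ l}
  let f := (Denumerable.eqv {k : ℕ // ¬k < l.length}).trans (Denumerable.eqv {x : α // x ∉ l}).symm
  let e : {k : ℕ // k < l.length} ≃ {x : α // x ∈ l} :=
    Fin.equivSubtype.symm.trans (List.Nodup.getEquiv l hl)
  let π : ℕ ≃ α := (Equiv.sumCompl _).symm.trans ((e.sumCongr f).trans (Equiv.sumCompl _))
  refine ⟨π, π.bijective, fun k hk => ?_⟩
  simp [π, Equiv.sumCompl_symm_apply_of_pos (p := (· < l.length)) hk, e]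

theorem Finset.exists_bijective_image_range_eq {α : Type*} [DecidableEq α] [Infinite α]
    [Countable α] {A Γ : Finset α} (hAΓ : A ⊆ Γ) :
    ∃ π : ℕ → α, Function.Bijective π ∧ (∀ k, π k ∈ Γ ↔ k < #Γ) ∧
      (range #A).image π = A := by
  set l := A.toList ++ (Γ \ A).toList
  have hl : l.Nodup := (A.nodup_toList.append (Γ \ A).nodup_toList) fun _ hA hΓA =>
    (mem_sdiff.1 (mem_toList.1 hΓA)).2 (mem_toList.1 hA)
  have hmem : ∀ x, x ∈ l ↔ x ∈ Γ := fun x => by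
    simp only [l, List.mem_append, mem_toList, mem_sdiff]
    constructor
    · rintro (h | h)
      exacts [hAΓ h, h.1]
    · tauto
  have hlen : l.length = #Γ := by
    simp [l, card_sdiff_of_subset hAΓ, card_le_card hAΓ]
  obtain ⟨π, hπ, hπl⟩ := hl.exists_bijective_getElem
  refine ⟨π, hπ, fun k => ⟨fun hk => ?_, fun hk => ?_⟩, ?_⟩
  · obtain ⟨j, hj, hjk⟩ := List.mem_iff_getElem.1 ((hmem _).2 hk)
    rw [← hπl j hj] at hjk
    exact hlen ▸ hπ.1 hjk ▸ hj
  · rw [← hmem, hπl k (hlen ▸ hk)]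
    exact List.getElem_mem _
  · refine eq_of_subset_of_card_le (fun x hx => ?_) ?_
    · obtain ⟨k, hk, rfl⟩ := mem_image.1 hx
      have hk : k < A.toList.length := by simpa using hk
      rw [hπl k (by simp only [l, List.length_append]; omega), List.getElem_append_left hk]
      exact mem_toList.1 (List.getElem_mem _)
    · rw [card_image_of_injective _ hπ.1, card_range]

section Rademacher

variable {X : Type*} [NormedAddCommGroup X] [NormedSpace ℝ X]

def signedSum {n : ℕ} (ε : Fin n → Bool) (v : Fin n → X) : X :=
  ∑ i, (if ε i then (1 : ℝ) else -1) • v i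

noncomputable def rademacherAverage {n : ℕ} (v : Fin n → X) : ℝ :=
  (∑ ε : Fin n → Bool, ‖signedSum ε v‖) / 2 ^ n

variable (X) in
def HasType2With (T : ℝ) : Prop :=
  ∀ (n : ℕ) (v : Fin n → X), rademacherAverage v ≤ T * Real.sqrt (∑ i, ‖v i‖ ^ 2)

variable (X) in
def HasCotypeWith (p C : ℝ) : Prop :=
  ∀ (n : ℕ) (v : Fin n → X), (∑ i, ‖v i‖ ^ p) ^ (1 / p) ≤ C * rademacherAverage v

theorem le_rademacherAverage {n : ℕ} {v : Fin n → X} {a : ℝ}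
    (h : ∀ ε, a ≤ ‖signedSum ε v‖) : a ≤ rademacherAverage v := by
  rw [rademacherAverage, le_div_iff₀ (by positivity)]
  simpa [mul_comm] using card_nsmul_le_sum univ (fun ε => ‖signedSum ε v‖) a fun ε _ => h ε

theorem rademacherAverage_le {n : ℕ} {v : Fin n → X} {b : ℝ}
    (h : ∀ ε, ‖signedSum ε v‖ ≤ b) : rademacherAverage v ≤ b := by
  rw [rademacherAverage, div_le_iff₀ (by positivity)]
  simpa [mul_comm] using sum_le_card_nsmul univ (fun ε => ‖signedSum ε v‖) b fun ε _ => h ε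

end Rademacher

theorem card_rpow_mul_le_sum_norm_rpow {E ι : Type*} [SeminormedAddCommGroup E] [Fintype ι]
    {v : ι → E} {c p : ℝ} (hc : 0 ≤ c) (hv : ∀ i, c ≤ ‖v i‖) (hp : 0 < p) :
    (Fintype.card ι : ℝ) ^ (1 / p) * c ≤ (∑ i, ‖v i‖ ^ p) ^ (1 / p) := by
  have hsum : (Fintype.card ι : ℝ) * c ^ p ≤ ∑ i, ‖v i‖ ^ p := by
    simpa using sum_le_sum fun i (_ : i ∈ univ) => Real.rpow_le_rpow hc (hv i) hp.le
  calc (Fintype.card ι : ℝ) ^ (1 / p) * c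
      = ((Fintype.card ι : ℝ) * c ^ p) ^ (1 / p) := by
        rw [Real.mul_rpow (by positivity) (by positivity), ← Real.rpow_mul hc,
          mul_one_div_cancel hp.ne', Real.rpow_one]
    _ ≤ _ := Real.rpow_le_rpow (by positivity) hsum (by positivity)

theorem sqrt_sum_norm_sq_le {E ι : Type*} [SeminormedAddCommGroup E] [Fintype ι]
    {v : ι → E} {C : ℝ} (hC : 0 ≤ C) (hv : ∀ i, ‖v i‖ ≤ C) :
    Real.sqrt (∑ i, ‖v i‖ ^ 2) ≤ C * Real.sqrt (Fintype.card ι) := by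
  rw [Real.sqrt_le_iff, mul_pow, Real.sq_sqrt (by positivity)]
  refine ⟨by positivity, ?_⟩
  simpa [mul_comm] using sum_le_sum fun i (_ : i ∈ univ) =>
    pow_le_pow_left₀ (norm_nonneg _) (hv i) 2

namespace QGBasis

variable {X : Type*} [NormedAddCommGroup X] [NormedSpace ℝ X] (B : QGBasis X)

theorem coeff_sum_smul (j : ℕ) (Γ : Finset ℕ) (a : ℕ → ℝ) :
    B.coeff j (∑ k ∈ Γ, a k • B.e k) = if j ∈ Γ then a j else 0 := by
  let φ : X →+ ℝ := AddMonoidHom.mk' (B.coeff j) (B.coeff_add j)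
  change φ _ = _
  simp [map_sum, φ, B.coeff_smul, B.coeff_e]

theorem G_eq_S_image {π : ℕ → ℕ} (hπ : Function.Injective π) (N : ℕ) (x : X) :
    B.G π N x = B.S ((range N).image π) x := by
  rw [S, sum_image fun _ _ _ _ h => hπ h, G]

theorem S_sum_smul_of_subset {A Γ : Finset ℕ} (hAΓ : A ⊆ Γ) (a : ℕ → ℝ) :
    B.S A (∑ k ∈ Γ, a k • B.e k) = ∑ k ∈ A, a k • B.e k :=
  sum_congr rfl fun k hk => by rw [coeff_sum_smul, if_pos (hAΓ hk)]

theorem isGreedyPerm_sum_smul {Γ : Finset ℕ} {a : ℕ → ℝ} (ha : ∀ k ∈ Γ, |a k| = 1)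
    {π : ℕ → ℕ} (hπ : Function.Bijective π) (hπΓ : ∀ k, π k ∈ Γ ↔ k < #Γ) :
    B.IsGreedyPerm (∑ k ∈ Γ, a k • B.e k) π := by
  have habs : ∀ k, |B.coeff (π k) (∑ k ∈ Γ, a k • B.e k)| = if k < #Γ then 1 else 0 := by
    intro k
    rw [coeff_sum_smul]
    split_ifs with h₁ h₂ h₂
    exacts [ha _ h₁, absurd ((hπΓ k).1 h₁) h₂, absurd ((hπΓ k).2 h₂) h₁, abs_zero]
  refine ⟨hπ, fun k => ?_⟩
  rw [habs, habs]
  split_ifs <;> first | omega | norm_num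

theorem norm_sum_smul_le_of_subset {K : ℝ} (hK : B.QuasiGreedyWith K) {A Γ : Finset ℕ}
    (hAΓ : A ⊆ Γ) {a : ℕ → ℝ} (ha : ∀ k ∈ Γ, |a k| = 1) :
    ‖∑ k ∈ A, a k • B.e k‖ ≤ K * ‖∑ k ∈ Γ, a k • B.e k‖ := by
  obtain ⟨π, hπ, hπΓ, hπA⟩ := exists_bijective_image_range_eq hAΓ
  have := (hK _ π (B.isGreedyPerm_sum_smul ha hπ hπΓ) #A).1
  rwa [G_eq_S_image _ hπ.1, hπA, S_sum_smul_of_subset _ hAΓ] at this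

theorem one_le_of_quasiGreedyWith {K : ℝ} (hK : B.QuasiGreedyWith K) : 1 ≤ K := by
  have h := B.norm_sum_smul_le_of_subset hK (subset_refl {0}) (a := 1) (by simp)
  have hpos : 0 < ‖B.e 0‖ := B.c_norm_pos.trans_le (B.norm_e_ge 0)
  simp only [sum_singleton, Pi.one_apply, one_smul] at h
  nlinarith

theorem norm_sum_smul_le_two_mul {K : ℝ} (hK : B.QuasiGreedyWith K) {Γ : Finset ℕ}
    {a b : ℕ → ℝ} (ha : ∀ k ∈ Γ, |a k| = 1) (hb : ∀ k ∈ Γ, |b k| = 1) :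
    ‖∑ k ∈ Γ, b k • B.e k‖ ≤ 2 * K * ‖∑ k ∈ Γ, a k • B.e k‖ := by
  classical
  set E := Γ.filter fun k => a k = b k
  have hEΓ : E ⊆ Γ := filter_subset _ _
  have hsplit : ∑ k ∈ Γ, b k • B.e k =
      ∑ k ∈ E, a k • B.e k - ∑ k ∈ Γ \ E, a k • B.e k := by
    rw [← sum_sdiff hEΓ, sub_eq_neg_add, ← sum_neg_distrib]
    congr 1
    · refine sum_congr rfl fun k hk => ?_
      obtain ⟨hkΓ, hkE⟩ := mem_sdiff.1 hk
      have hba : b k = -a k :=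
        ((abs_eq_abs.1 ((hb k hkΓ).trans (ha k hkΓ).symm)).resolve_left
          fun h => hkE (mem_filter.2 ⟨hkΓ, h.symm⟩))
      rw [hba, neg_smul]
    · refine sum_congr rfl fun k hk => ?_
      rw [(mem_filter.1 hk).2]
  calc ‖∑ k ∈ Γ, b k • B.e k‖
      ≤ ‖∑ k ∈ E, a k • B.e k‖ + ‖∑ k ∈ Γ \ E, a k • B.e k‖ := hsplit ▸ norm_sub_le _ _
    _ ≤ K * ‖∑ k ∈ Γ, a k • B.e k‖ + K * ‖∑ k ∈ Γ, a k • B.e k‖ :=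
      add_le_add (B.norm_sum_smul_le_of_subset hK hEΓ ha)
        (B.norm_sum_smul_le_of_subset hK sdiff_subset ha)
    _ = 2 * K * ‖∑ k ∈ Γ, a k • B.e k‖ := by ring

theorem norm_sum_smul_comp_le_two_mul {K : ℝ} (hK : B.QuasiGreedyWith K) {ι : Type*}
    [Fintype ι] {g : ι → ℕ} (hg : Function.Injective g) {s t : ι → ℝ}
    (hs : ∀ i, |s i| = 1) (ht : ∀ i, |t i| = 1) :
    ‖∑ i, t i • B.e (g i)‖ ≤ 2 * K * ‖∑ i, s i • B.e (g i)‖ := by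
  classical
  have hsum : ∀ u : ι → ℝ,
      ∑ i, u i • B.e (g i) = ∑ k ∈ univ.image g, Function.extend g u 0 k • B.e k := by
    intro u
    rw [sum_image fun _ _ _ _ h => hg h]
    simp only [hg.extend_apply]
  have hunit : ∀ u : ι → ℝ, (∀ i, |u i| = 1) →
      ∀ k ∈ univ.image g, |Function.extend g u 0 k| = 1 := by
    rintro u hu _ hk
    obtain ⟨i, -, rfl⟩ := mem_image.1 hk
    rw [hg.extend_apply]
    exact hu i
  rw [hsum s, hsum t]
  exact B.norm_sum_smul_le_two_mul hK (hunit s hs) (hunit t ht)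

theorem sum_e_eq_sum_orderEmbOfFin (Γ : Finset ℕ) :
    ∑ k ∈ Γ, B.e k = ∑ i, (1 : ℝ) • B.e (Γ.orderEmbOfFin rfl i) := by
  conv_lhs => rw [← Γ.image_orderEmbOfFin_univ rfl]
  rw [sum_image fun _ _ _ _ h => (Γ.orderEmbOfFin rfl).injective h]
  simp

theorem norm_sum_e_le_rademacherAverage {K : ℝ} (hK : B.QuasiGreedyWith K) (Γ : Finset ℕ) :
    ‖∑ k ∈ Γ, B.e k‖ ≤ 2 * K * rademacherAverage (B.e ∘ Γ.orderEmbOfFin rfl) := by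
  have hK0 : 0 < 2 * K := by linarith [B.one_le_of_quasiGreedyWith hK]
  rw [← div_le_iff₀' hK0]
  refine le_rademacherAverage fun ε => ?_
  rw [div_le_iff₀' hK0, sum_e_eq_sum_orderEmbOfFin]
  exact B.norm_sum_smul_comp_le_two_mul hK (Γ.orderEmbOfFin rfl).injective
    (fun i => by split_ifs <;> simp) (by simp)

theorem rademacherAverage_le_norm_sum_e {K : ℝ} (hK : B.QuasiGreedyWith K) (Γ : Finset ℕ) :
    rademacherAverage (B.e ∘ Γ.orderEmbOfFin rfl) ≤ 2 * K * ‖∑ k ∈ Γ, B.e k‖ := by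
  refine rademacherAverage_le fun ε => ?_
  rw [sum_e_eq_sum_orderEmbOfFin]
  exact B.norm_sum_smul_comp_le_two_mul hK (Γ.orderEmbOfFin rfl).injective (by simp)
    (fun i => by split_ifs <;> simp)

theorem c_norm_mul_card_rpow_le {p Cq K : ℝ} (hp : 0 < p) (hCq : 0 ≤ Cq)
    (hX : HasCotypeWith X p Cq) (hK : B.QuasiGreedyWith K) (Γ : Finset ℕ) :
    B.c_norm * (#Γ : ℝ) ^ (1 / p) ≤ 2 * K * Cq * ‖∑ k ∈ Γ, B.e k‖ := by
  calc B.c_norm * (#Γ : ℝ) ^ (1 / p)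
      = (Fintype.card (Fin #Γ) : ℝ) ^ (1 / p) * B.c_norm := by simp [mul_comm]
    _ ≤ (∑ i, ‖(B.e ∘ Γ.orderEmbOfFin rfl) i‖ ^ p) ^ (1 / p) :=
      card_rpow_mul_le_sum_norm_rpow B.c_norm_pos.le (fun _ => B.norm_e_ge _) hp
    _ ≤ Cq * rademacherAverage (B.e ∘ Γ.orderEmbOfFin rfl) := hX _ _
    _ ≤ Cq * (2 * K * ‖∑ k ∈ Γ, B.e k‖) := by
      gcongr
      exact B.rademacherAverage_le_norm_sum_e hK Γ
    _ = 2 * K * Cq * ‖∑ k ∈ Γ, B.e k‖ := by ring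

theorem norm_sum_e_le_mul_sqrt_card {T K : ℝ} (hT : 0 ≤ T) (hX : HasType2With X T)
    (hK : B.QuasiGreedyWith K) (Γ : Finset ℕ) :
    ‖∑ k ∈ Γ, B.e k‖ ≤ 2 * K * T * B.C_norm * Real.sqrt #Γ := by
  have hK0 : 0 ≤ 2 * K := by linarith [B.one_le_of_quasiGreedyWith hK]
  have hC : 0 ≤ B.C_norm := (norm_nonneg _).trans (B.norm_e_le 0)
  calc ‖∑ k ∈ Γ, B.e k‖
      ≤ 2 * K * rademacherAverage (B.e ∘ Γ.orderEmbOfFin rfl) :=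
        B.norm_sum_e_le_rademacherAverage hK Γ
    _ ≤ 2 * K * (T * Real.sqrt (∑ i, ‖(B.e ∘ Γ.orderEmbOfFin rfl) i‖ ^ 2)) := by
      gcongr
      exact hX _ _
    _ ≤ 2 * K * (T * (B.C_norm * Real.sqrt (Fintype.card (Fin #Γ)))) := by
      gcongr
      exact sqrt_sum_norm_sq_le hC fun _ => B.norm_e_le _
    _ = 2 * K * T * B.C_norm * Real.sqrt #Γ := by
      rw [Fintype.card_fin]
      ring

theorem hr_le {f : ℕ → ℝ} (hf : ∀ Γ : Finset ℕ, ‖∑ k ∈ Γ, B.e k‖ ≤ f #Γ) {N : ℕ}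
    (hN : 0 ≤ f N) : B.hr N ≤ f N :=
  Real.sSup_le (by rintro _ ⟨Γ, rfl, rfl⟩; exact hf Γ) hN

theorem le_hl {f : ℕ → ℝ} (hf : ∀ Γ : Finset ℕ, f #Γ ≤ ‖∑ k ∈ Γ, B.e k‖) (N : ℕ) :
    f N ≤ B.hl N :=
  le_csInf ⟨_, range N, card_range N, rfl⟩ (by rintro _ ⟨Γ, rfl, rfl⟩; exact hf Γ)

theorem mu_le_of_rpow_bounds {c C α β : ℝ} (hc : 0 < c) (hC : 0 ≤ C) (hαβ : α ≤ β)
    (hlow : ∀ Γ : Finset ℕ, c * (#Γ : ℝ) ^ α ≤ ‖∑ k ∈ Γ, B.e k‖)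
    (hup : ∀ Γ : Finset ℕ, ‖∑ k ∈ Γ, B.e k‖ ≤ C * (#Γ : ℝ) ^ β) (N : ℕ) :
    B.mu N ≤ C / c * (N : ℝ) ^ (β - α) := by
  refine Real.sSup_le ?_ (by positivity)
  rintro _ ⟨k, hk, hkN, rfl⟩
  have hk0 : (0 : ℝ) < k := by exact_mod_cast hk
  calc B.hr k / B.hl k
      ≤ C * (k : ℝ) ^ β / (c * (k : ℝ) ^ α) :=
        div_le_div₀ (by positivity) (B.hr_le (f := fun n => C * (n : ℝ) ^ β) hup (by positivity))
          (by positivity) (B.le_hl (f := fun n => c * (n : ℝ) ^ α) hlow k)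
    _ = C / c * (k : ℝ) ^ (β - α) := by
      rw [Real.rpow_sub hk0]
      field_simp
    _ ≤ C / c * (N : ℝ) ^ (β - α) := by gcongr

end QGBasis

theorem stmt17_general {X : Type*} [NormedAddCommGroup X] [NormedSpace ℝ X]
    (p : ℝ) (hp : 2 ≤ p)
    (T : ℝ) (hT : 0 < T)
    (htype : ∀ (n : ℕ) (v : Fin n → X),
      (∑ ε : Fin n → Bool, ‖∑ i, (if ε i then (1 : ℝ) else -1) • v i‖) / 2 ^ n ≤
        T * Real.sqrt (∑ i, ‖v i‖ ^ 2))
    (Cq : ℝ) (hCq : 0 < Cq)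
    (hcotype : ∀ (n : ℕ) (v : Fin n → X),
      (∑ i, ‖v i‖ ^ p) ^ (1 / p) ≤
        Cq * ((∑ ε : Fin n → Bool, ‖∑ i, (if ε i then (1 : ℝ) else -1) • v i‖) / 2 ^ n))
    (B : QGBasis X) (K : ℝ) (hK : B.QuasiGreedyWith K) :
    ∃ c C C' : ℝ, 0 < c ∧ 0 < C ∧ 0 < C' ∧
      (∀ Γ : Finset ℕ,
        c * (Γ.card : ℝ) ^ (1 / p) ≤ ‖∑ k ∈ Γ, B.e k‖ ∧
        ‖∑ k ∈ Γ, B.e k‖ ≤ C * Real.sqrt Γ.card) ∧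
      (∀ N : ℕ, 1 ≤ N → B.mu N ≤ C' * (N : ℝ) ^ ((1 : ℝ) / 2 - 1 / p)) := by
  have hK0 : 0 < 2 * K := by linarith [B.one_le_of_quasiGreedyWith hK]
  have hC_norm : 0 < B.C_norm := B.c_norm_pos.trans_le ((B.norm_e_ge 0).trans (B.norm_e_le 0))
  set c := B.c_norm / (2 * K * Cq)
  set C := 2 * K * T * B.C_norm
  have hc : 0 < c := div_pos B.c_norm_pos (by positivity)
  have hC : 0 < C := by positivity
  have hlow : ∀ Γ : Finset ℕ, c * (#Γ : ℝ) ^ (1 / p) ≤ ‖∑ k ∈ Γ, B.e k‖ := fun Γ => by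
    rw [div_mul_eq_mul_div, div_le_iff₀' (by positivity)]
    exact B.c_norm_mul_card_rpow_le (by linarith) hCq.le hcotype hK Γ
  have hup : ∀ Γ : Finset ℕ, ‖∑ k ∈ Γ, B.e k‖ ≤ C * Real.sqrt #Γ :=
    B.norm_sum_e_le_mul_sqrt_card hT.le htype hK
  refine ⟨c, C, C / c, hc, hC, div_pos hC hc, fun Γ => ⟨hlow Γ, hup Γ⟩, fun N _ => ?_⟩
  refine B.mu_le_of_rpow_bounds hc hC.le (one_div_le_one_div_of_le two_pos hp) hlow
    (fun Γ => ?_) N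
  rw [← Real.sqrt_eq_rpow]
  exact hup Γ

/-- in a Banach space of type 2 (constant `T`) and cotype `p`
(constant `Cq`), a seminormalized quasi-greedy basis satisfies
`c|Γ|^{1/p} ≤ ‖∑_Γ e_k‖ ≤ C|Γ|^{1/2}`, and hence `μ(N) ≲ N^{1/2−1/p}`.
Type and cotype are expressed via averages over random signs. -/
theorem stmt17 {X : Type*} [NormedAddCommGroup X] [NormedSpace ℝ X] [CompleteSpace X]
    (p : ℝ) (hp : 2 ≤ p)
    (T : ℝ) (hT : 0 < T)
    (htype : ∀ (n : ℕ) (v : Fin n → X),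
      (∑ ε : Fin n → Bool, ‖∑ i, (if ε i then (1 : ℝ) else -1) • v i‖) / 2 ^ n ≤
        T * Real.sqrt (∑ i, ‖v i‖ ^ 2))
    (Cq : ℝ) (hCq : 0 < Cq)
    (hcotype : ∀ (n : ℕ) (v : Fin n → X),
      (∑ i, ‖v i‖ ^ p) ^ (1 / p) ≤
        Cq * ((∑ ε : Fin n → Bool, ‖∑ i, (if ε i then (1 : ℝ) else -1) • v i‖) / 2 ^ n))
    (B : QGBasis X) (K : ℝ) (hK : B.QuasiGreedyWith K) :
    ∃ c C C' : ℝ, 0 < c ∧ 0 < C ∧ 0 < C' ∧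
      (∀ Γ : Finset ℕ,
        c * (Γ.card : ℝ) ^ (1 / p) ≤ ‖∑ k ∈ Γ, B.e k‖ ∧
        ‖∑ k ∈ Γ, B.e k‖ ≤ C * Real.sqrt Γ.card) ∧
      (∀ N : ℕ, 1 ≤ N → B.mu N ≤ C' * (N : ℝ) ^ ((1 : ℝ) / 2 - 1 / p)) :=
  stmt17_general p hp T hT htype Cq hCq hcotype B K hK
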